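/- arXiv:1103.1560 — 5 statements merged into one kernel-verified Lean document; each statement's English description precedes it below -/
import Mathlib

section
/- Let M ∈ SL(2,ℤ). Then trace(M) > 2 if and only if there exist C ∈ SL(2,ℤ), an integer k ≥ 1, and positive integers a₁, b₁, …, a_k, b_k such that C M C⁻¹ = L^{a₁} R^{b₁} ⋯ L^{a_k} R^{b_k}. -/
/-
A matrix `M = (a b; c d)` with `a + d > 2` is conjugate to one with `b, c > 0`: among its
conjugates take one with `|c|` minimal. Conjugating by `T ^ n` replaces `d - a` by
`d - a - 2nc` without changing `c`, and conjugating by `S` turns `b` into `-c`, so minimality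
gives a conjugate with `|d - a| ≤ |c| ≤ |b|`; for it `bc ≤ 0` would force
`(a + d)² = (d - a)² + 4 + 4bc ≤ 4`. Such a conjugate has nonnegative entries, and a matrix of
`SL(2, ℤ)` with nonnegative entries is a word in `L` and `R` (subtract the smaller row from the
larger one). A word containing both letters is cyclically conjugate to a word starting with `L`
and ending with `R`, i.e. to a product of blocks `L^a R^b` with `a, b > 0`. Conversely such a
product has positive entries, and then `ad = 1 + bc ≥ 2` forces `a + d ≥ 3`.
-/

open Matrix

/-- `L = (1 1; 0 1)` as an element of `SL(2, ℤ)`. -/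
noncomputable def Lmat : Matrix.SpecialLinearGroup (Fin 2) ℤ :=
  ⟨!![1, 1; 0, 1], by norm_num [Matrix.det_fin_two_of]⟩

/-- `R = (1 0; 1 1)` as an element of `SL(2, ℤ)`. -/
noncomputable def Rmat : Matrix.SpecialLinearGroup (Fin 2) ℤ :=
  ⟨!![1, 0; 1, 1], by norm_num [Matrix.det_fin_two_of]⟩

open MatrixGroups
open ModularGroup (S T coe_S coe_T_zpow T_mul_apply_one)
open Matrix.SpecialLinearGroup (coe_mul coe_inv coe_one)

theorem Matrix.mul_apply_pos {l m n R : Type*} [Fintype m] [Nonempty m] [Semiring R]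
    [PartialOrder R] [IsStrictOrderedRing R] {A : Matrix l m R} {B : Matrix m n R}
    (hA : ∀ i j, 0 < A i j) (hB : ∀ i j, 0 < B i j) (i : l) (k : n) : 0 < (A * B) i k :=
  Finset.sum_pos (fun j _ => mul_pos (hA i j) (hB j k)) Finset.univ_nonempty

theorem Matrix.SpecialLinearGroup.trace_eq_of_isConj {n R : Type*} [Fintype n] [DecidableEq n]
    [CommRing R] {M N : SpecialLinearGroup n R} (h : IsConj M N) :
    trace (N : Matrix n n R) = trace (M : Matrix n n R) := by
  obtain ⟨C, rfl⟩ := isConj_iff.1 h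
  rw [coe_mul, coe_mul, trace_mul_cycle, ← coe_mul, inv_mul_cancel, coe_one, one_mul]

theorem SL2_mul_sub_mul_eq_one (A : SL(2, ℤ)) : A 0 0 * A 1 1 - A 0 1 * A 1 0 = 1 := by
  have := A.det_coe
  rwa [det_fin_two] at this

theorem two_lt_trace_of_forall_pos {A : SL(2, ℤ)} (hA : ∀ i j, 0 < A i j) :
    2 < trace (A : Matrix (Fin 2) (Fin 2) ℤ) := by
  have := SL2_mul_sub_mul_eq_one A
  rw [trace_fin_two]
  nlinarith [hA 0 0, hA 0 1, hA 1 0, hA 1 1]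

theorem coe_Lmat_pow (n : ℕ) :
    ((Lmat ^ n : SL(2, ℤ)) : Matrix (Fin 2) (Fin 2) ℤ) = !![1, (n : ℤ); 0, 1] := by
  rw [← coe_T_zpow, zpow_natCast]; rfl

theorem coe_Rmat_pow (n : ℕ) :
    ((Rmat ^ n : SL(2, ℤ)) : Matrix (Fin 2) (Fin 2) ℤ) = !![1, 0; (n : ℤ), 1] := by
  induction n with
  | zero => simp [one_fin_two]
  | succ n ih =>
    rw [pow_succ, coe_mul, ih]
    simp [Rmat]

theorem Lmat_mul_apply_one (X : SL(2, ℤ)) : (Lmat * X) 1 = X 1 := T_mul_apply_one X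

theorem Rmat_mul_apply_zero (X : SL(2, ℤ)) : (Rmat * X) 0 = X 0 := by
  ext j
  rw [coe_mul]
  simp [Rmat, mul_apply, Fin.sum_univ_two]

theorem coe_Lmat_inv_mul (N : SL(2, ℤ)) :
    ((Lmat⁻¹ * N : SL(2, ℤ)) : Matrix (Fin 2) (Fin 2) ℤ) =
      !![N 0 0 - N 1 0, N 0 1 - N 1 1; N 1 0, N 1 1] := by
  rw [coe_mul, coe_inv]
  ext i j
  fin_cases i <;> fin_cases j <;>
    simp [adjugate_fin_two, Lmat, mul_apply, Fin.sum_univ_two] <;> ring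

theorem coe_Rmat_inv_mul (N : SL(2, ℤ)) :
    ((Rmat⁻¹ * N : SL(2, ℤ)) : Matrix (Fin 2) (Fin 2) ℤ) =
      !![N 0 0, N 0 1; N 1 0 - N 0 0, N 1 1 - N 0 1] := by
  rw [coe_mul, coe_inv]
  ext i j
  fin_cases i <;> fin_cases j <;>
    simp [adjugate_fin_two, Rmat, mul_apply, Fin.sum_univ_two] <;> ring

theorem coe_T_zpow_conj (n : ℤ) (N : SL(2, ℤ)) :
    ((T ^ n * N * (T ^ n)⁻¹ : SL(2, ℤ)) : Matrix (Fin 2) (Fin 2) ℤ) =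
      !![N 0 0 + n * N 1 0, N 0 1 + n * (N 1 1 - N 0 0) - n ^ 2 * N 1 0;
         N 1 0, N 1 1 - n * N 1 0] := by
  rw [← _root_.zpow_neg, coe_mul, coe_mul, coe_T_zpow, coe_T_zpow,
    eta_fin_two (N : Matrix _ _ ℤ)]
  ext i j
  fin_cases i <;> fin_cases j <;> simp <;> ring

theorem coe_S_conj (N : SL(2, ℤ)) :
    ((S * N * S⁻¹ : SL(2, ℤ)) : Matrix (Fin 2) (Fin 2) ℤ) =
      !![N 1 1, -N 1 0; -N 0 1, N 0 0] := by
  rw [coe_mul, coe_mul, coe_inv, coe_S, eta_fin_two (N : Matrix _ _ ℤ)]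
  simp [adjugate_fin_two]

def IsBlockProduct (N : SL(2, ℤ)) : Prop :=
  ∃ k : ℕ, 1 ≤ k ∧ ∃ a b : Fin k → ℕ, (∀ i, 0 < a i) ∧ (∀ i, 0 < b i) ∧
    N = (List.ofFn fun i => Lmat ^ (a i) * Rmat ^ (b i)).prod

theorem isBlockProduct_pow_mul_pow {a b : ℕ} (ha : 0 < a) (hb : 0 < b) :
    IsBlockProduct (Lmat ^ a * Rmat ^ b) :=
  ⟨1, le_rfl, fun _ => a, fun _ => b, fun _ => ha, fun _ => hb, by simp⟩

theorem IsBlockProduct.pow_mul_pow_mul {a b : ℕ} (ha : 0 < a) (hb : 0 < b) {B : SL(2, ℤ)}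
    (hB : IsBlockProduct B) : IsBlockProduct (Lmat ^ a * Rmat ^ b * B) := by
  obtain ⟨k, -, a', b', ha', hb', rfl⟩ := hB
  refine ⟨k + 1, by omega, Fin.cons a a', Fin.cons b b', Fin.cases ha ha', Fin.cases hb hb', ?_⟩
  simp [List.ofFn_succ, List.prod_cons]

theorem pow_mul_pow_apply_pos {a b : ℕ} (ha : 0 < a) (hb : 0 < b) (i j : Fin 2) :
    0 < (Lmat ^ a * Rmat ^ b) i j := by
  rw [coe_mul, coe_Lmat_pow, coe_Rmat_pow]
  fin_cases i <;> fin_cases j <;> simp <;> positivity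

theorem IsBlockProduct.two_lt_trace {B : SL(2, ℤ)} (hB : IsBlockProduct B) :
    2 < trace (B : Matrix (Fin 2) (Fin 2) ℤ) := by
  obtain ⟨k, hk, a, b, ha, hb, rfl⟩ := hB
  refine two_lt_trace_of_forall_pos
    (List.prod_induction_nonempty (fun A : SL(2, ℤ) => ∀ i j, 0 < A i j)
      (fun A B hA hB => ?_) ?_ ?_)
  · simpa only [coe_mul] using mul_apply_pos hA hB
  · simp only [ne_eq, List.ofFn_eq_nil_iff]; omega
  · simp only [List.mem_ofFn, forall_exists_index]
    rintro _ i rfl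
    exact pow_mul_pow_apply_pos (ha i) (hb i)

theorem eq_one_or_rows_le_of_nonneg {N : SL(2, ℤ)} (hN : ∀ i j, 0 ≤ N i j) :
    N = 1 ∨ (N 1 0 ≤ N 0 0 ∧ N 1 1 ≤ N 0 1) ∨ (N 0 0 ≤ N 1 0 ∧ N 0 1 ≤ N 1 1) := by
  have hdet := SL2_mul_sub_mul_eq_one N
  have := hN 0 0; have := hN 0 1; have := hN 1 0; have := hN 1 1
  by_contra! h
  obtain ⟨hne, h₁, h₂⟩ := h
  rcases lt_trichotomy (N 1 0) (N 0 0) with hca | hca | hac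
  · -- `c < a` and `b < d` give `ad ≥ (b + 1)(c + 1)`, so `b = c = 0`
    have hbd := h₁ hca.le
    have hb : N 0 1 = 0 := by nlinarith
    have hc : N 1 0 = 0 := by nlinarith
    have had : N 0 0 * N 1 1 = 1 := by rw [hb] at hdet; linarith
    obtain ⟨ha, hd⟩ | ⟨ha, -⟩ := Int.eq_one_or_neg_one_of_mul_eq_one' had
    · exact hne (by ext i j; fin_cases i <;> fin_cases j <;> simp [ha, hb, hc, hd])
    · omega
  · linarith [h₁ hca.le, h₂ hca.ge]
  · nlinarith [h₂ hac.le]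

theorem mem_closure_of_nonneg {N : SL(2, ℤ)} (hN : ∀ i j, 0 ≤ N i j) :
    N ∈ Submonoid.closure {Lmat, Rmat} := by
  induction hs : (N 0 0 + N 0 1 + N 1 0 + N 1 1).toNat using Nat.strong_induction_on
    generalizing N with
  | _ s ih =>
  have hdet := SL2_mul_sub_mul_eq_one N
  have := hN 0 0; have := hN 0 1; have := hN 1 0; have := hN 1 1
  rcases eq_one_or_rows_le_of_nonneg hN with rfl | ⟨h₁, h₂⟩ | ⟨h₁, h₂⟩
  · exact one_mem _
  · have hrow : 0 < N 1 0 + N 1 1 := by nlinarith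
    have hN' : ∀ i j, 0 ≤ (Lmat⁻¹ * N) i j := by
      rw [coe_Lmat_inv_mul]; intro i j; fin_cases i <;> fin_cases j <;> simp <;> linarith
    rw [← mul_inv_cancel_left Lmat N]
    refine mul_mem (Submonoid.subset_closure (by simp)) (ih _ ?_ hN' rfl)
    rw [coe_Lmat_inv_mul]
    simp only [of_apply, cons_val', cons_val_zero, cons_val_one, cons_val_fin_one]
    omega
  · have hrow : 0 < N 0 0 + N 0 1 := by nlinarith
    have hN' : ∀ i j, 0 ≤ (Rmat⁻¹ * N) i j := by
      rw [coe_Rmat_inv_mul]; intro i j; fin_cases i <;> fin_cases j <;> simp <;> linarith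
    rw [← mul_inv_cancel_left Rmat N]
    refine mul_mem (Submonoid.subset_closure (by simp)) (ih _ ?_ hN' rfl)
    rw [coe_Rmat_inv_mul]
    simp only [of_apply, cons_val', cons_val_zero, cons_val_one, cons_val_fin_one]
    omega

theorem isBlockProduct_of_mem_closure {X : SL(2, ℤ)} (hX : X ∈ Submonoid.closure {Lmat, Rmat})
    {a : ℕ} (b : ℕ) (ha : 0 < a) : IsBlockProduct (Lmat ^ a * Rmat ^ b * X * Rmat) := by
  induction hX using Submonoid.closure_induction_left generalizing a b with
  | one =>
    rw [mul_one, mul_assoc, ← pow_succ]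
    exact isBlockProduct_pow_mul_pow ha b.succ_pos
  | mul_left s hs Y _ ih =>
    rcases hs with rfl | rfl
    · rcases b.eq_zero_or_pos with rfl | hb
      · simpa [pow_succ, mul_assoc] using ih 0 a.succ_pos
      · simpa [mul_assoc] using (ih 0 one_pos).pow_mul_pow_mul ha hb
    · simpa [pow_succ, mul_assoc] using ih (b + 1) ha

theorem exists_isBlockProduct_isConj {X : SL(2, ℤ)} (hX : X ∈ Submonoid.closure {Lmat, Rmat})
    (a b : ℕ) (ha : 0 < a ∨ 0 < X 0 1) (hb : 0 < b ∨ 0 < X 1 0) :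
    ∃ B, IsBlockProduct B ∧ IsConj (Lmat ^ a * Rmat ^ b * X) B := by
  induction hX using Submonoid.closure_induction_left generalizing a b with
  | one =>
    simp only [coe_one, ne_eq, zero_ne_one, one_ne_zero, not_false_eq_true, one_apply_ne,
      lt_self_iff_false, or_false] at ha hb
    rw [mul_one]
    exact ⟨_, isBlockProduct_pow_mul_pow ha hb, IsConj.refl _⟩
  | mul_left s hs Y hY ih =>
    rcases hs with rfl | rfl
    · rcases b.eq_zero_or_pos with rfl | hb'
      · have hY10 : 0 < Y 1 0 := by simpa [Lmat_mul_apply_one] using hb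
        simpa [pow_succ, mul_assoc] using ih (a + 1) 0 (Or.inl a.succ_pos) (Or.inr hY10)
      · -- `L^a R^(b+1) (L Y)` is cyclically conjugate to `L (Y L^a R^b) R`
        obtain ⟨b, rfl⟩ := Nat.exists_eq_add_of_lt hb'
        refine ⟨_, isBlockProduct_of_mem_closure (X := Y * Lmat ^ a * Rmat ^ b) ?_ 0 one_pos,
          ?_⟩
        · exact mul_mem (mul_mem hY (pow_mem (Submonoid.subset_closure (by simp)) _))
            (pow_mem (Submonoid.subset_closure (by simp)) _)
        · refine isConj_iff.2 ⟨(Lmat ^ a * Rmat ^ (b + 1))⁻¹, ?_⟩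
          simp only [pow_succ, pow_zero, mul_one]
          group
    · have hY01 : 0 < a ∨ 0 < Y 0 1 := by simpa [Rmat_mul_apply_zero] using ha
      simpa [pow_succ, mul_assoc] using ih a (b + 1) hY01 (Or.inl b.succ_pos)

theorem Int.exists_abs_sub_two_mul_mul_le (e : ℤ) {c : ℤ} (hc : c ≠ 0) :
    ∃ n : ℤ, |e - 2 * n * c| ≤ |c| := by
  refine ⟨round ((e : ℚ) / (2 * c)), ?_⟩
  have hc' : (c : ℚ) ≠ 0 := by exact_mod_cast hc
  have key : ((e - 2 * round ((e : ℚ) / (2 * c)) * c : ℤ) : ℚ) =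
      2 * c * ((e : ℚ) / (2 * c) - round ((e : ℚ) / (2 * c))) := by
    push_cast; field_simp
  have h := abs_sub_round ((e : ℚ) / (2 * c))
  have : |((e - 2 * round ((e : ℚ) / (2 * c)) * c : ℤ) : ℚ)| ≤ |(c : ℚ)| := by
    rw [key, abs_mul, abs_mul, abs_two]
    nlinarith [abs_nonneg (c : ℚ)]
  exact_mod_cast this

theorem mul_pos_of_abs_sub_le_of_abs_le {a b c d : ℤ} (hdet : a * d - b * c = 1)
    (htr : 2 < a + d) (hda : |d - a| ≤ |c|) (hcb : |c| ≤ |b|) : 0 < b * c := by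
  by_contra! hbc
  have h₁ : (d - a) ^ 2 ≤ c ^ 2 := sq_le_sq.2 hda
  have h₂ : c ^ 2 ≤ -(b * c) := by
    rw [← sq_abs, sq, ← abs_of_nonpos hbc, abs_mul]
    exact mul_le_mul_of_nonneg_right hcb (abs_nonneg c)
  nlinarith

theorem exists_isConj_offDiag_pos_or_natAbs_lt {N : SL(2, ℤ)}
    (htr : 2 < trace (N : Matrix (Fin 2) (Fin 2) ℤ)) :
    (∃ N', IsConj N N' ∧ 0 < N' 0 1 ∧ 0 < N' 1 0) ∨
      ∃ N', IsConj N N' ∧ (N' 1 0).natAbs < (N 1 0).natAbs := by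
  rw [trace_fin_two] at htr
  have hc : N 1 0 ≠ 0 := by
    intro hc
    have had := SL2_mul_sub_mul_eq_one N
    rw [hc, mul_zero, sub_zero] at had
    obtain ⟨ha, hd⟩ | ⟨ha, hd⟩ := Int.eq_one_or_neg_one_of_mul_eq_one' had <;> omega
  obtain ⟨n, hn⟩ := Int.exists_abs_sub_two_mul_mul_le (N 1 1 - N 0 0) hc
  set N₁ := T ^ n * N * (T ^ n)⁻¹ with hN₁
  have hconj₁ : IsConj N N₁ := isConj_iff.2 ⟨_, rfl⟩
  have hconjS : IsConj N₁ (S * N₁ * S⁻¹) := isConj_iff.2 ⟨_, rfl⟩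
  have hS₀₁ : (S * N₁ * S⁻¹) 0 1 = -N₁ 1 0 := by rw [coe_S_conj]; rfl
  have hS₁₀ : (S * N₁ * S⁻¹) 1 0 = -N₁ 0 1 := by rw [coe_S_conj]; rfl
  have h₁₀ : N₁ 1 0 = N 1 0 := by rw [hN₁, coe_T_zpow_conj]; rfl
  have hda : |N₁ 1 1 - N₁ 0 0| ≤ |N₁ 1 0| := by
    have : N₁ 1 1 - N₁ 0 0 = N 1 1 - N 0 0 - 2 * n * N 1 0 := by
      rw [hN₁, coe_T_zpow_conj]
      simp only [of_apply, cons_val', cons_val_zero, cons_val_one, cons_val_fin_one]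
      ring
    rwa [this, h₁₀]
  rcases lt_or_ge |N₁ 0 1| |N₁ 1 0| with hlt | hle
  · refine Or.inr ⟨_, hconj₁.trans hconjS, ?_⟩
    rw [hS₁₀, Int.natAbs_neg, ← h₁₀]
    zify
    exact hlt
  · have htr₁ : 2 < N₁ 0 0 + N₁ 1 1 := by
      rwa [← trace_fin_two, Matrix.SpecialLinearGroup.trace_eq_of_isConj hconj₁, trace_fin_two]
    refine Or.inl ?_
    have hbc := mul_pos_of_abs_sub_le_of_abs_le (SL2_mul_sub_mul_eq_one N₁) htr₁ hda hle
    rcases pos_and_pos_or_neg_and_neg_of_mul_pos hbc with ⟨hb, hc⟩ | ⟨hb, hc⟩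
    · exact ⟨N₁, hconj₁, hb, hc⟩
    · exact ⟨_, hconj₁.trans hconjS, by rw [hS₀₁]; linarith, by rw [hS₁₀]; linarith⟩

theorem exists_isConj_offDiag_pos {M : SL(2, ℤ)}
    (htr : 2 < trace (M : Matrix (Fin 2) (Fin 2) ℤ)) :
    ∃ N, IsConj M N ∧ 0 < N 0 1 ∧ 0 < N 1 0 := by
  induction hs : (M 1 0).natAbs using Nat.strong_induction_on generalizing M with
  | _ s ih =>
  obtain hpos | ⟨M', hMM', hlt⟩ := exists_isConj_offDiag_pos_or_natAbs_lt htr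
  · exact hpos
  · obtain ⟨N, hM'N, hN⟩ := ih _ (hs ▸ hlt)
      (by rwa [Matrix.SpecialLinearGroup.trace_eq_of_isConj hMM']) rfl
    exact ⟨N, hMM'.trans hM'N, hN⟩

theorem forall_pos_of_offDiag_pos {N : SL(2, ℤ)}
    (htr : 2 < trace (N : Matrix (Fin 2) (Fin 2) ℤ))
    (hb : 0 < N 0 1) (hc : 0 < N 1 0) : ∀ i j, 0 < N i j := by
  have hdet := SL2_mul_sub_mul_eq_one N
  rw [trace_fin_two] at htr
  have ha : 0 < N 0 0 := by nlinarith
  have hd : 0 < N 1 1 := by nlinarith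
  intro i j
  fin_cases i <;> fin_cases j <;> assumption

/-- A matrix `M ∈ SL(2, ℤ)` has trace `> 2` iff it is conjugate in `SL(2, ℤ)` to a
product `L^{a₁} R^{b₁} ⋯ L^{a_k} R^{b_k}` with `k ≥ 1` and all `aᵢ, bᵢ` positive. -/
theorem stmt_1 (M : Matrix.SpecialLinearGroup (Fin 2) ℤ) :
    Matrix.trace (M : Matrix (Fin 2) (Fin 2) ℤ) > 2 ↔
      ∃ (C : Matrix.SpecialLinearGroup (Fin 2) ℤ) (k : ℕ), 1 ≤ k ∧
        ∃ a b : Fin k → ℕ, (∀ i, 0 < a i) ∧ (∀ i, 0 < b i) ∧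
          C * M * C⁻¹ = (List.ofFn fun i => Lmat ^ (a i) * Rmat ^ (b i)).prod := by
  change _ ↔ ∃ C, IsBlockProduct (C * M * C⁻¹)
  constructor
  · intro htr
    obtain ⟨N, hMN, hb, hc⟩ := exists_isConj_offDiag_pos htr
    have hN := forall_pos_of_offDiag_pos
      (Matrix.SpecialLinearGroup.trace_eq_of_isConj hMN ▸ htr) hb hc
    obtain ⟨B, hB, hNB⟩ := exists_isBlockProduct_isConj
      (mem_closure_of_nonneg fun i j => (hN i j).le) 0 0 (Or.inr hb) (Or.inr hc)
    rw [pow_zero, pow_zero, one_mul, one_mul] at hNB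
    obtain ⟨C, rfl⟩ := isConj_iff.1 (hMN.trans hNB)
    exact ⟨C, hB⟩
  · rintro ⟨C, hB⟩
    rw [← Matrix.SpecialLinearGroup.trace_eq_of_isConj (isConj_iff.2 ⟨C, rfl⟩)]
    exact hB.two_lt_trace
end

section
/- The polynomial χ₁ = X⁴ − 2X³ − 30X² − 2X + 1 has four distinct real roots; consequently its splitting field K₁ over ℚ, taken inside ℂ, is contained in ℝ (K₁ is totally real). -/
open Polynomial

private lemma ivt_root {a b : ℝ} (hab : a ≤ b)
    (h : (fun x : ℝ => x^4-2*x^3-30*x^2-2*x+1) a ≤ 0 ∧ 0 ≤ (fun x : ℝ => x^4-2*x^3-30*x^2-2*x+1) b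
       ∨ (fun x : ℝ => x^4-2*x^3-30*x^2-2*x+1) b ≤ 0 ∧ 0 ≤ (fun x : ℝ => x^4-2*x^3-30*x^2-2*x+1) a) :
    ∃ x ∈ Set.Icc a b, x^4-2*x^3-30*x^2-2*x+1 = 0 := by
  have hc : Continuous (fun x : ℝ => x^4-2*x^3-30*x^2-2*x+1) := by continuity
  rcases h with ⟨h1, h2⟩ | ⟨h1, h2⟩
  · obtain ⟨x, hx, hx0⟩ := intermediate_value_Icc hab hc.continuousOn ⟨h1, h2⟩
    exact ⟨x, hx, hx0⟩
  · obtain ⟨x, hx, hx0⟩ := intermediate_value_Icc' hab hc.continuousOn ⟨h1, h2⟩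
    exact ⟨x, hx, hx0⟩

/-- `χ₁ = X⁴ - 2X³ - 30X² - 2X + 1` has four distinct real roots; consequently its
splitting field `K₁ ⊆ ℂ` over `ℚ` is contained in `ℝ` (it is totally real). -/
theorem stmt_7 (χ₁ : ℚ[X]) (hχ : χ₁ = X ^ 4 - 2 * X ^ 3 - 30 * X ^ 2 - 2 * X + 1)
    (K₁ : IntermediateField ℚ ℂ) (hK : K₁ = IntermediateField.adjoin ℚ (χ₁.rootSet ℂ)) :
    (∃ r : Fin 4 → ℝ, Function.Injective r ∧ ∀ i, Polynomial.aeval (r i) χ₁ = 0) ∧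
      ∀ z : ℂ, z ∈ K₁ → ∃ x : ℝ, z = (x : ℂ) := by
  subst hχ hK
  set p : ℚ[X] := X ^ 4 - 2 * X ^ 3 - 30 * X ^ 2 - 2 * X + 1 with hp
  have haev : ∀ x : ℝ, aeval x p = x^4-2*x^3-30*x^2-2*x+1 := by
    intro x; simp [hp, map_ofNat]
  have hdeg : p.natDegree = 4 := by rw [hp]; compute_degree!
  have hp0 : p ≠ 0 := by
    intro h; rw [h] at hdeg; simp at hdeg
  -- four real roots from IVT
  obtain ⟨x0, hx0, hx0'⟩ := ivt_root (a := -5) (b := -4) (by norm_num) (by norm_num)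
  obtain ⟨x1, hx1, hx1'⟩ := ivt_root (a := -3) (b := -1/10) (by norm_num) (by norm_num)
  obtain ⟨x2, hx2, hx2'⟩ := ivt_root (a := 1/10) (b := 1) (by norm_num) (by norm_num)
  obtain ⟨x3, hx3, hx3'⟩ := ivt_root (a := 2) (b := 7) (by norm_num) (by norm_num)
  set r : Fin 4 → ℝ := ![x0, x1, x2, x3] with hr
  obtain ⟨hx0a, hx0b⟩ := hx0
  obtain ⟨hx1a, hx1b⟩ := hx1
  obtain ⟨hx2a, hx2b⟩ := hx2
  obtain ⟨hx3a, hx3b⟩ := hx3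
  have hrinj : Function.Injective r := by
    intro i j hij
    fin_cases i <;> fin_cases j <;> simp [hr] at hij ⊢ <;> linarith
  have hroot : ∀ i, aeval (r i) p = 0 := by
    intro i
    fin_cases i <;> simp only [hr, Matrix.cons_val_zero, Matrix.cons_val_one, Matrix.head_cons,
      Matrix.cons_val_two, Matrix.tail_cons, Matrix.cons_val_three] <;>
      rw [haev] <;> assumption
  refine ⟨⟨r, hrinj, hroot⟩, ?_⟩
  -- every complex root of p is real
  have hcroot : ∀ i, aeval ((r i : ℂ)) p = 0 := by
    intro i
    have : ((r i : ℝ) : ℂ) = algebraMap ℝ ℂ (r i) := rfl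
    rw [this, aeval_algebraMap_apply, hroot i, map_zero]
  -- the finset of the four complex roots
  set c : Fin 4 → ℂ := fun i => (r i : ℂ) with hc
  have hcinj : Function.Injective c := by
    intro i j h
    apply hrinj
    have h2 : ((r i : ℝ) : ℂ) = ((r j : ℝ) : ℂ) := h
    exact_mod_cast h2
  set q : ℂ[X] := p.map (algebraMap ℚ ℂ) with hq
  have hq0 : q ≠ 0 := by
    simpa [hq, Polynomial.map_eq_zero] using hp0
  have hqdeg : q.natDegree = 4 := by
    rw [hq, natDegree_map]; exact hdeg
  set t : Finset ℂ := Finset.univ.image c with ht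
  have htcard : t.card = 4 := by
    rw [ht, Finset.card_image_of_injective _ hcinj, Finset.card_univ, Fintype.card_fin]
  have hsub : t ⊆ q.roots.toFinset := by
    intro z hz
    rw [ht, Finset.mem_image] at hz
    obtain ⟨i, _, rfl⟩ := hz
    rw [Multiset.mem_toFinset, mem_roots hq0]
    rw [hq, IsRoot, eval_map, ← aeval_def]
    exact hcroot i
  have hcard2 : q.roots.toFinset.card ≤ 4 := by
    calc q.roots.toFinset.card ≤ Multiset.card q.roots := Multiset.toFinset_card_le _
    _ ≤ q.natDegree := card_roots' q
    _ = 4 := hqdeg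
  have heq : q.roots.toFinset = t :=
    (Finset.eq_of_subset_of_card_le hsub (htcard ▸ hcard2)).symm
  have hrealroots : p.rootSet ℂ ⊆ Set.range ((↑) : ℝ → ℂ) := by
    intro z hz
    rw [mem_rootSet] at hz
    have hzt : z ∈ t := by
      rw [← heq, Multiset.mem_toFinset, mem_roots hq0, hq, IsRoot, eval_map, ← aeval_def]
      exact hz.2
    rw [ht, Finset.mem_image] at hzt
    obtain ⟨i, _, rfl⟩ := hzt
    exact ⟨r i, rfl⟩
  -- conclude containment in ℝ
  let F : IntermediateField ℚ ℂ :=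
    Subfield.toIntermediateField Complex.ofRealHom.fieldRange
      (fun q => ⟨(q : ℝ), by simp⟩)
  have hle : IntermediateField.adjoin ℚ (p.rootSet ℂ) ≤ F := by
    rw [IntermediateField.adjoin_le_iff]
    intro z hz
    obtain ⟨x, hx⟩ := hrealroots hz
    exact ⟨x, hx⟩
  intro z hz
  obtain ⟨x, hx⟩ := hle hz
  exact ⟨x, hx.symm⟩
end

section
/- Let K₁ ⊆ ℂ be the splitting field over ℚ of χ₁ = X⁴ − 2X³ − 30X² − 2X + 1. Then the intermediate fields of the extension K₁/ℚ that have degree 2 over ℚ are exactly the three fields ℚ(√3), ℚ(√11) and ℚ(√33). -/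
/-!
The roots of `χ₁` are `(1 ± √33 ± √(30 ± 2√33)) / 2`, and `√(30 + 2√33) · √(30 - 2√33) = 16√3`,
so `K₁ = ℚ(√33)(√(30 + 2√33))(√3)` is a tower of three quadratic extensions. A quadratic subfield
of `K₁` is `ℚ(φ)` for some `φ ∉ ℚ` with `φ² ∈ ℚ`. In a quadratic extension `E(α)` with `α² ∈ E`
(characteristic `≠ 2`), an element whose square lies in `E` lies in `E` or in `E · α`; descending
the tower, the rational square roots in `K₁` are the rational multiples of `1, √3, √11, √33`.
-/

open Polynomial IntermediateField

namespace IntermediateField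

section Quadratic

variable {K L : Type*} [Field K] [Field L] [Algebra K L]

theorem exists_eq_add_mul_of_mem_adjoin_simple {α : L} {a : K} (ha : α ^ 2 = algebraMap K L a)
    {x : L} (hx : x ∈ K⟮α⟯) : ∃ u v : K, x = algebraMap K L u + algebraMap K L v * α := by
  have hint : IsIntegral K α := by
    refine ⟨X ^ 2 - C a, monic_X_pow_sub_C a two_ne_zero, ?_⟩
    simp [ha]
  rw [← mem_toSubalgebra, adjoin_simple_toSubalgebra_of_isAlgebraic hint.isAlgebraic] at hx
  induction hx using Algebra.adjoin_induction with
  | mem y hy => exact ⟨0, 1, by rw [Set.mem_singleton_iff.mp hy]; simp⟩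
  | algebraMap r => exact ⟨r, 0, by simp⟩
  | add y z _ _ hy hz =>
    obtain ⟨u, v, rfl⟩ := hy
    obtain ⟨u', v', rfl⟩ := hz
    exact ⟨u + u', v + v', by simp only [map_add]; ring⟩
  | mul y z _ _ hy hz =>
    obtain ⟨u, v, rfl⟩ := hy
    obtain ⟨u', v', rfl⟩ := hz
    refine ⟨u * u' + v * v' * a, u * v' + v * u', ?_⟩
    simp only [map_add, map_mul]
    linear_combination (algebraMap K L v * algebraMap K L v') * ha

theorem exists_eq_add_mul_of_mem_adjoin_insert {E : IntermediateField K L} {α : L}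
    (hα : α ^ 2 ∈ E) {x : L} (hx : x ∈ adjoin K (insert α (E : Set L))) :
    ∃ u ∈ E, ∃ v ∈ E, x = u + v * α := by
  rw [Set.insert_eq, Set.union_comm, ← restrictScalars_adjoin, mem_restrictScalars] at hx
  obtain ⟨u, v, rfl⟩ := exists_eq_add_mul_of_mem_adjoin_simple (a := ⟨_, hα⟩) rfl hx
  exact ⟨u, u.2, v, v.2, rfl⟩

theorem eq_zero_of_add_mul_mem {E : IntermediateField K L} {α u v : L} (hα : α ∉ E)
    (hu : u ∈ E) (hv : v ∈ E) (h : u + v * α ∈ E) : v = 0 := by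
  by_contra hv0
  refine hα ?_
  have : α = (u + v * α - u) * v⁻¹ := by field_simp; ring
  exact this ▸ mul_mem (sub_mem h hu) (inv_mem hv)

theorem mem_or_exists_eq_mul_of_sq_mem [NeZero (2 : L)] {E : IntermediateField K L} {α : L}
    (hα : α ∉ E) (hα2 : α ^ 2 ∈ E) {x : L} (hx : x ∈ adjoin K (insert α (E : Set L)))
    (hx2 : x ^ 2 ∈ E) : x ∈ E ∨ ∃ y ∈ E, x = y * α := by
  obtain ⟨u, hu, v, hv, rfl⟩ := exists_eq_add_mul_of_mem_adjoin_insert hα2 hx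
  have h2uv : 2 * u * v = 0 := by
    refine eq_zero_of_add_mul_mem hα (add_mem (pow_mem hu 2) (mul_mem (pow_mem hv 2) hα2))
      (mul_mem (mul_mem (ofNat_mem E 2) hu) hv) ?_
    convert hx2 using 1; ring
  rcases mul_eq_zero.mp h2uv with h | rfl
  · obtain rfl := (mul_eq_zero.mp h).resolve_left two_ne_zero
    exact .inr ⟨v, hv, zero_add _⟩
  · exact .inl (by simpa using hu)

theorem notMem_bot_of_sq_eq {α : L} {a : K} (ha : α ^ 2 = algebraMap K L a) (hsq : ¬IsSquare a) :
    α ∉ (⊥ : IntermediateField K L) := by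
  rw [mem_bot]
  rintro ⟨q, rfl⟩
  refine hsq ⟨q, (algebraMap K L).injective ?_⟩
  rw [← ha, map_mul, sq]

theorem finrank_adjoin_simple_of_sq_eq {α : L} {a : K} (ha : α ^ 2 = algebraMap K L a)
    (hsq : ¬IsSquare a) : Module.finrank K K⟮α⟯ = 2 := by
  have hcoeff : Irreducible (X ^ 2 - C a) :=
    X_pow_sub_C_irreducible_of_prime Nat.prime_two fun b hb => hsq ⟨b, by rw [← hb, sq]⟩
  have hmonic : (X ^ 2 - C a).Monic := monic_X_pow_sub_C a two_ne_zero
  have hroot : aeval α (X ^ 2 - C a) = 0 := by simp [ha]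
  rw [adjoin.finrank ⟨_, hmonic, by rwa [← aeval_def]⟩,
    ← minpoly.eq_of_irreducible_of_monic hcoeff hroot hmonic, natDegree_X_pow_sub_C]

theorem exists_sq_mem_bot_of_finrank_eq_two [NeZero (2 : K)] {F : IntermediateField K L}
    (hF : Module.finrank K F = 2) :
    ∃ φ ∈ F, φ ∉ (⊥ : IntermediateField K L) ∧ φ ^ 2 ∈ (⊥ : IntermediateField K L) := by
  have : FiniteDimensional K F := .of_finrank_pos (by omega)
  have hbot : ⊥ < F := bot_lt_iff_ne_bot.mpr fun h => by
    rw [h, IntermediateField.finrank_bot] at hF; omega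
  obtain ⟨θ, hθF, hθ⟩ := SetLike.exists_of_lt hbot
  have hdep : ¬LinearIndependent K ![(1 : F), ⟨θ, hθF⟩, ⟨θ, hθF⟩ ^ 2] := fun h => by
    simpa [hF] using h.fintype_card_le_finrank
  obtain ⟨g, hg, i, hgi⟩ := Fintype.not_linearIndependent_iff.mp hdep
  set ι := algebraMap K L
  have hrel : ι (g 0) + ι (g 1) * θ + ι (g 2) * θ ^ 2 = 0 := by
    simpa [Fin.sum_univ_three, Algebra.smul_def] using congrArg ((↑) : F → L) hg
  by_cases hg2 : g 2 = 0
  · have hg1 : g 1 = 0 := by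
      by_contra hg1
      refine hθ (mem_bot.mpr ⟨-g 0 / g 1, ?_⟩)
      rw [map_div₀, map_neg, div_eq_iff ((map_ne_zero ι).mpr hg1)]
      simp only [hg2, map_zero, zero_mul, add_zero] at hrel
      linear_combination -hrel
    have hg0 : g 0 = 0 := by simpa [hg1, hg2] using hrel
    fin_cases i <;> simp_all
  -- complete the square in `g₀ + g₁ θ + g₂ θ² = 0`
  refine ⟨ι (2 * g 2) * θ + ι (g 1),
    add_mem (mul_mem (algebraMap_mem F _) hθF) (algebraMap_mem F _), fun hφ => hθ ?_,
    mem_bot.mpr ⟨g 1 ^ 2 - 4 * g 0 * g 2, ?_⟩⟩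
  · have h2g2 : ι (2 * g 2) ≠ 0 := (map_ne_zero ι).mpr (mul_ne_zero two_ne_zero hg2)
    have : θ = (ι (2 * g 2) * θ + ι (g 1) - ι (g 1)) / ι (2 * g 2) := by field_simp; ring
    rw [this]
    exact div_mem (sub_mem hφ (algebraMap_mem _ _)) (algebraMap_mem _ _)
  · simp only [map_sub, map_mul, map_pow, map_ofNat]
    linear_combination (-4 * ι (g 2)) * hrel

theorem eq_adjoin_simple_of_finrank_eq_two {F : IntermediateField K L} {w : L}
    (hF : Module.finrank K F = 2) (hw : w ∈ F) (hw2 : Module.finrank K K⟮w⟯ = 2) : F = K⟮w⟯ := by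
  have : FiniteDimensional K F := .of_finrank_pos (by omega)
  exact (eq_of_le_of_finrank_eq (adjoin_simple_le_iff.mpr hw) (hw2.trans hF.symm)).symm

end Quadratic

end IntermediateField

namespace Chi₁

noncomputable def sqrt3 : ℂ := (√3 : ℝ)
noncomputable def sqrt11 : ℂ := (√11 : ℝ)
noncomputable def sqrt33 : ℂ := (√33 : ℝ)
noncomputable def sqrtPlus : ℂ := (√(30 + 2 * √33) : ℝ)
noncomputable def sqrtMinus : ℂ := (√(30 - 2 * √33) : ℝ)

theorem ofReal_sqrt_sq {x : ℝ} (hx : 0 ≤ x) : ((√x : ℝ) : ℂ) ^ 2 = x := by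
  rw [← Complex.ofReal_pow, Real.sq_sqrt hx]

theorem sqrt3_sq : sqrt3 ^ 2 = 3 := by rw [sqrt3, ofReal_sqrt_sq (by norm_num)]; norm_num
theorem sqrt11_sq : sqrt11 ^ 2 = 11 := by rw [sqrt11, ofReal_sqrt_sq (by norm_num)]; norm_num
theorem sqrt33_sq : sqrt33 ^ 2 = 33 := by rw [sqrt33, ofReal_sqrt_sq (by norm_num)]; norm_num

theorem sqrtPlus_sq : sqrtPlus ^ 2 = 30 + 2 * sqrt33 := by
  rw [sqrtPlus, ofReal_sqrt_sq (by positivity), sqrt33]; push_cast; rfl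

theorem sqrtMinus_sq : sqrtMinus ^ 2 = 30 - 2 * sqrt33 := by
  have : √33 ≤ 15 := Real.sqrt_le_iff.mpr ⟨by norm_num, by norm_num⟩
  rw [sqrtMinus, ofReal_sqrt_sq (by linarith), sqrt33]; push_cast; rfl

theorem sqrtPlus_ne_zero : sqrtPlus ≠ 0 :=
  Complex.ofReal_ne_zero.mpr (Real.sqrt_pos.mpr (by positivity)).ne'

theorem sqrtPlus_mul_sqrtMinus : sqrtPlus * sqrtMinus = 16 * sqrt3 := by
  have h : (30 + 2 * √33) * (30 - 2 * √33) = 16 ^ 2 * 3 := by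
    nlinarith [Real.sq_sqrt (show (0 : ℝ) ≤ 33 by norm_num)]
  have : √(30 + 2 * √33) * √(30 - 2 * √33) = 16 * √3 := by
    rw [← Real.sqrt_mul (by positivity), h, Real.sqrt_mul (by positivity),
      Real.sqrt_sq (by norm_num)]
  simp only [sqrtPlus, sqrtMinus, sqrt3]
  exact_mod_cast this

theorem sqrt3_mul_sqrt33 : sqrt3 * sqrt33 = 3 * sqrt11 := by
  have : √3 * √33 = 3 * √11 := by
    rw [← Real.sqrt_mul (by norm_num), show (3 : ℝ) * 33 = 3 ^ 2 * 11 by norm_num,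
      Real.sqrt_mul (by positivity), Real.sqrt_sq (by norm_num)]
  simp only [sqrt3, sqrt33, sqrt11]
  exact_mod_cast this

theorem sqrt3_notMem_bot : sqrt3 ∉ (⊥ : IntermediateField ℚ ℂ) :=
  notMem_bot_of_sq_eq (a := 3) (by simp [sqrt3_sq]) (by norm_num)

theorem sqrt11_notMem_bot : sqrt11 ∉ (⊥ : IntermediateField ℚ ℂ) :=
  notMem_bot_of_sq_eq (a := 11) (by simp [sqrt11_sq]) (by norm_num)

theorem sqrt33_notMem_bot : sqrt33 ∉ (⊥ : IntermediateField ℚ ℂ) :=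
  notMem_bot_of_sq_eq (a := 33) (by simp [sqrt33_sq]) (by norm_num)

/-- For `z = c + d√33`, the `√33`-coordinate of `z² (30 + 2√33)` vanishes only if
`(c + 15d)² = 192 d²`, and `192` is not a rational square. -/
theorem eq_zero_of_sq_mul_mem_bot {z : ℂ} (hz : z ∈ ℚ⟮sqrt33⟯)
    (h : z ^ 2 * (30 + 2 * sqrt33) ∈ (⊥ : IntermediateField ℚ ℂ)) : z = 0 := by
  obtain ⟨c, d, rfl⟩ :=
    exists_eq_add_mul_of_mem_adjoin_simple (a := (33 : ℚ)) (by simp [sqrt33_sq]) hz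
  simp only [eq_ratCast] at h ⊢
  have hcoeff : (((2 * (c ^ 2 + 33 * d ^ 2) + 60 * c * d : ℚ)) : ℂ) = 0 := by
    refine eq_zero_of_add_mul_mem sqrt33_notMem_bot
      (SubfieldClass.ratCast_mem _ (30 * (c ^ 2 + 33 * d ^ 2) + 132 * c * d))
      (SubfieldClass.ratCast_mem _ _) ?_
    convert h using 1
    push_cast
    linear_combination (-(30 * (d : ℂ) ^ 2 + 4 * c * d) - 2 * d ^ 2 * sqrt33) * sqrt33_sq
  have hcd : (c + 15 * d) ^ 2 = 192 * d ^ 2 := by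
    have : 2 * (c ^ 2 + 33 * d ^ 2) + 60 * c * d = 0 := by exact_mod_cast hcoeff
    linear_combination this / 2
  obtain rfl : d = 0 := by
    by_contra hd
    have : ¬IsSquare (192 : ℚ) := by norm_num
    exact this ⟨(c + 15 * d) / d, by field_simp; linear_combination -hcd⟩
  obtain rfl : c = 0 := by simpa using hcd
  simp

theorem sqrtPlus_notMem : sqrtPlus ∉ ℚ⟮sqrt33⟯ := fun h => by
  refine inv_ne_zero sqrtPlus_ne_zero (eq_zero_of_sq_mul_mem_bot (inv_mem h) ?_)
  rw [← sqrtPlus_sq, ← mul_pow, inv_mul_cancel₀ sqrtPlus_ne_zero, one_pow]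
  exact one_mem _

theorem exists_eq_mul_of_mem_adjoin_sqrt33 {x : ℂ} (hx : x ∈ ℚ⟮sqrt33⟯)
    (hx2 : x ^ 2 ∈ (⊥ : IntermediateField ℚ ℂ)) :
    ∃ c ∈ (⊥ : IntermediateField ℚ ℂ), ∃ w ∈ ({1, sqrt33} : Set ℂ), x = c * w := by
  rw [Set.singleton_def, ← adjoin_insert_adjoin, adjoin_empty] at hx
  rcases mem_or_exists_eq_mul_of_sq_mem sqrt33_notMem_bot
    (by rw [sqrt33_sq]; exact ofNat_mem _ 33) hx hx2 with hx | ⟨c, hc, rfl⟩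
  · exact ⟨x, hx, 1, by simp, (mul_one x).symm⟩
  · exact ⟨c, hc, sqrt33, by simp, rfl⟩

theorem exists_eq_mul_of_mem_adjoin_sqrtPlus {x : ℂ} (hx : x ∈ ℚ⟮sqrtPlus, sqrt33⟯)
    (hx2 : x ^ 2 ∈ (⊥ : IntermediateField ℚ ℂ)) :
    ∃ c ∈ (⊥ : IntermediateField ℚ ℂ), ∃ w ∈ ({1, sqrt33} : Set ℂ), x = c * w := by
  have hsq : sqrtPlus ^ 2 ∈ ℚ⟮sqrt33⟯ := by
    rw [sqrtPlus_sq]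
    exact add_mem (ofNat_mem _ 30) (mul_mem (ofNat_mem _ 2) (mem_adjoin_simple_self ℚ _))
  rw [← adjoin_insert_adjoin] at hx
  rcases mem_or_exists_eq_mul_of_sq_mem sqrtPlus_notMem hsq hx
    (bot_le (α := IntermediateField ℚ ℂ) hx2) with hx | ⟨y, hy, rfl⟩
  · exact exists_eq_mul_of_mem_adjoin_sqrt33 hx hx2
  · obtain rfl := eq_zero_of_sq_mul_mem_bot hy (by rwa [← sqrtPlus_sq, ← mul_pow])
    exact ⟨0, zero_mem _, 1, by simp, by ring⟩

theorem sqrt3_notMem : sqrt3 ∉ ℚ⟮sqrtPlus, sqrt33⟯ := fun h => by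
  obtain ⟨c, hc, w, hw, hcw⟩ :=
    exists_eq_mul_of_mem_adjoin_sqrtPlus h (by rw [sqrt3_sq]; exact ofNat_mem _ 3)
  rcases hw with rfl | rfl
  · exact sqrt3_notMem_bot (by rwa [hcw, mul_one])
  · -- `√3 = c √33` gives `3 √11 = √3 √33 = 33 c`
    refine sqrt11_notMem_bot ?_
    have : sqrt11 = c * 11 := by
      linear_combination (-1 / 3 : ℂ) * sqrt3_mul_sqrt33 + (sqrt33 / 3) * hcw + (c / 3) * sqrt33_sq
    exact this ▸ mul_mem hc (ofNat_mem _ 11)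

theorem exists_eq_mul_of_mem_adjoin_sqrt3 {x : ℂ} (hx : x ∈ ℚ⟮sqrt3, sqrtPlus, sqrt33⟯)
    (hx2 : x ^ 2 ∈ (⊥ : IntermediateField ℚ ℂ)) :
    ∃ c ∈ (⊥ : IntermediateField ℚ ℂ), ∃ w ∈ ({1, sqrt3, sqrt11, sqrt33} : Set ℂ), x = c * w := by
  rw [← adjoin_insert_adjoin] at hx
  rcases mem_or_exists_eq_mul_of_sq_mem sqrt3_notMem (by rw [sqrt3_sq]; exact ofNat_mem _ 3) hx
    (bot_le (α := IntermediateField ℚ ℂ) hx2) with hx | ⟨y, hy, rfl⟩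
  · obtain ⟨c, hc, w, hw, rfl⟩ := exists_eq_mul_of_mem_adjoin_sqrtPlus hx hx2
    rcases hw with rfl | rfl
    exacts [⟨c, hc, 1, by simp, rfl⟩, ⟨c, hc, sqrt33, by simp, rfl⟩]
  · have hy2 : y ^ 2 ∈ (⊥ : IntermediateField ℚ ℂ) := by
      have : y ^ 2 = (y * sqrt3) ^ 2 / 3 := by rw [mul_pow, sqrt3_sq]; ring
      exact this ▸ div_mem hx2 (ofNat_mem _ 3)
    obtain ⟨c, hc, w, hw, rfl⟩ := exists_eq_mul_of_mem_adjoin_sqrtPlus hy hy2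
    rcases hw with rfl | rfl
    · exact ⟨c, hc, sqrt3, by simp, by ring⟩
    · exact ⟨3 * c, mul_mem (ofNat_mem _ 3) hc, sqrt11, by simp,
        by linear_combination c * sqrt3_mul_sqrt33⟩

theorem rootSet_eq : (X ^ 4 - 2 * X ^ 3 - 30 * X ^ 2 - 2 * X + 1 : ℚ[X]).rootSet ℂ =
    {(1 + sqrt33 + sqrtPlus) / 2, (1 + sqrt33 - sqrtPlus) / 2,
      (1 - sqrt33 + sqrtMinus) / 2, (1 - sqrt33 - sqrtMinus) / 2} := by
  have hne : (X ^ 4 - 2 * X ^ 3 - 30 * X ^ 2 - 2 * X + 1 : ℚ[X]) ≠ 0 := fun h => by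
    simpa using congrArg (eval 0) h
  have hfact (z : ℂ) : z ^ 4 - 2 * z ^ 3 - 30 * z ^ 2 - 2 * z + 1 =
      (z - (1 + sqrt33 + sqrtPlus) / 2) * (z - (1 + sqrt33 - sqrtPlus) / 2) *
        ((z - (1 - sqrt33 + sqrtMinus) / 2) * (z - (1 - sqrt33 - sqrtMinus) / 2)) := by
    have hplus : (z - (1 + sqrt33 + sqrtPlus) / 2) * (z - (1 + sqrt33 - sqrtPlus) / 2) =
        z ^ 2 - (1 + sqrt33) * z + 1 := by
      linear_combination sqrt33_sq / 4 - sqrtPlus_sq / 4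
    have hminus : (z - (1 - sqrt33 + sqrtMinus) / 2) * (z - (1 - sqrt33 - sqrtMinus) / 2) =
        z ^ 2 - (1 - sqrt33) * z + 1 := by
      linear_combination sqrt33_sq / 4 - sqrtMinus_sq / 4
    rw [hplus, hminus]
    linear_combination z ^ 2 * sqrt33_sq
  ext z
  simp only [mem_rootSet_of_ne hne, map_add, map_sub, map_mul, map_pow, aeval_X, map_one,
    map_ofNat, hfact, mul_eq_zero, sub_eq_zero, Set.mem_insert_iff, Set.mem_singleton_iff]
  tauto

theorem adjoin_rootSet : adjoin ℚ ((X ^ 4 - 2 * X ^ 3 - 30 * X ^ 2 - 2 * X + 1 : ℚ[X]).rootSet ℂ) =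
    ℚ⟮sqrt3, sqrtPlus, sqrt33⟯ := by
  rw [rootSet_eq]
  apply le_antisymm
  · set K := ℚ⟮sqrt3, sqrtPlus, sqrt33⟯
    have h3 : sqrt3 ∈ K := subset_adjoin _ _ (by simp)
    have hplus : sqrtPlus ∈ K := subset_adjoin _ _ (by simp)
    have h33 : sqrt33 ∈ K := subset_adjoin _ _ (by simp)
    have hminus : sqrtMinus ∈ K := by
      have : sqrtMinus = 16 * sqrt3 / sqrtPlus := by
        rw [eq_div_iff sqrtPlus_ne_zero]; linear_combination sqrtPlus_mul_sqrtMinus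
      exact this ▸ div_mem (mul_mem (ofNat_mem _ 16) h3) hplus
    rw [adjoin_le_iff]
    rintro _ (rfl | rfl | rfl | rfl)
    · exact div_mem (add_mem (add_mem (one_mem K) h33) hplus) (ofNat_mem K 2)
    · exact div_mem (sub_mem (add_mem (one_mem K) h33) hplus) (ofNat_mem K 2)
    · exact div_mem (add_mem (sub_mem (one_mem K) h33) hminus) (ofNat_mem K 2)
    · exact div_mem (sub_mem (sub_mem (one_mem K) h33) hminus) (ofNat_mem K 2)
  · set R := adjoin ℚ ({(1 + sqrt33 + sqrtPlus) / 2, (1 + sqrt33 - sqrtPlus) / 2,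
      (1 - sqrt33 + sqrtMinus) / 2, (1 - sqrt33 - sqrtMinus) / 2} : Set ℂ)
    have m1 : (1 + sqrt33 + sqrtPlus) / 2 ∈ R := subset_adjoin _ _ (by simp)
    have m2 : (1 + sqrt33 - sqrtPlus) / 2 ∈ R := subset_adjoin _ _ (by simp)
    have m3 : (1 - sqrt33 + sqrtMinus) / 2 ∈ R := subset_adjoin _ _ (by simp)
    have m4 : (1 - sqrt33 - sqrtMinus) / 2 ∈ R := subset_adjoin _ _ (by simp)
    have h33 : sqrt33 ∈ R := by convert sub_mem (add_mem m1 m2) (one_mem R) using 1; ring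
    have hplus : sqrtPlus ∈ R := by convert sub_mem m1 m2 using 1; ring
    have hminus : sqrtMinus ∈ R := by convert sub_mem m3 m4 using 1; ring
    have h3 : sqrt3 ∈ R := by
      convert div_mem (mul_mem hplus hminus) (ofNat_mem R 16) using 1
      rw [sqrtPlus_mul_sqrtMinus]; ring
    rw [adjoin_le_iff]
    rintro _ (rfl | rfl | rfl) <;> assumption

theorem sqrt11_mem : sqrt11 ∈ ℚ⟮sqrt3, sqrtPlus, sqrt33⟯ := by
  have : sqrt11 = sqrt3 * sqrt33 / 3 := by rw [sqrt3_mul_sqrt33]; ring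
  exact this ▸ div_mem (mul_mem (subset_adjoin _ _ (by simp)) (subset_adjoin _ _ (by simp)))
    (ofNat_mem _ 3)

end Chi₁

open Chi₁ in
/-- The intermediate fields of degree 2 over `ℚ` inside the splitting field `K₁ ⊆ ℂ` of
`χ₁ = X⁴ - 2X³ - 30X² - 2X + 1` are exactly `ℚ(√3)`, `ℚ(√11)` and `ℚ(√33)`. -/
theorem stmt_9 (χ₁ : ℚ[X]) (hχ : χ₁ = X ^ 4 - 2 * X ^ 3 - 30 * X ^ 2 - 2 * X + 1)
    (K₁ : IntermediateField ℚ ℂ) (hK : K₁ = IntermediateField.adjoin ℚ (χ₁.rootSet ℂ)) :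
    ∀ F : IntermediateField ℚ ℂ,
      (F ≤ K₁ ∧ Module.finrank ℚ F = 2) ↔
        (F = IntermediateField.adjoin ℚ {((Real.sqrt 3 : ℝ) : ℂ)} ∨
         F = IntermediateField.adjoin ℚ {((Real.sqrt 11 : ℝ) : ℂ)} ∨
         F = IntermediateField.adjoin ℚ {((Real.sqrt 33 : ℝ) : ℂ)}) := by
  intro F
  rw [hK, hχ, adjoin_rootSet]
  have h3 : Module.finrank ℚ ℚ⟮sqrt3⟯ = 2 :=
    finrank_adjoin_simple_of_sq_eq (a := 3) (by simp [sqrt3_sq]) (by norm_num)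
  have h11 : Module.finrank ℚ ℚ⟮sqrt11⟯ = 2 :=
    finrank_adjoin_simple_of_sq_eq (a := 11) (by simp [sqrt11_sq]) (by norm_num)
  have h33 : Module.finrank ℚ ℚ⟮sqrt33⟯ = 2 :=
    finrank_adjoin_simple_of_sq_eq (a := 33) (by simp [sqrt33_sq]) (by norm_num)
  constructor
  · rintro ⟨hle, hF⟩
    obtain ⟨φ, hφF, hφ, hφ2⟩ := exists_sq_mem_bot_of_finrank_eq_two hF
    obtain ⟨c, hc, w, hw, rfl⟩ := exists_eq_mul_of_mem_adjoin_sqrt3 (hle hφF) hφ2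
    have hc0 : c ≠ 0 := by rintro rfl; simp at hφ
    have hwF : w ∈ F := by
      simpa [hc0] using mul_mem (inv_mem (bot_le (α := IntermediateField ℚ ℂ) hc)) hφF
    rcases hw with rfl | rfl | rfl | rfl
    · exact absurd (by simpa using hc) hφ
    · exact .inl (eq_adjoin_simple_of_finrank_eq_two hF hwF h3)
    · exact .inr (.inl (eq_adjoin_simple_of_finrank_eq_two hF hwF h11))
    · exact .inr (.inr (eq_adjoin_simple_of_finrank_eq_two hF hwF h33))
  · rintro (rfl | rfl | rfl)
    · exact ⟨adjoin_simple_le_iff.mpr (subset_adjoin _ _ (.inl rfl)), h3⟩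
    · exact ⟨adjoin_simple_le_iff.mpr sqrt11_mem, h11⟩
    · exact ⟨adjoin_simple_le_iff.mpr (subset_adjoin _ _ (.inr (.inr rfl))), h33⟩
end

section
/- Let K₂ ⊆ ℂ be the splitting field over ℚ of χ₂ = X⁴ − 80X³ + 1438X² − 80X + 1. Then [K₂ : ℚ] = 8 and the Galois group Gal(K₂/ℚ) is isomorphic to the dihedral group of order 8. -/
/-!
Fix complex square roots `√41`, `√5`. Then
`χ₂ = (X² - (40 + 2√41) X + 1)(X² - (40 - 2√41) X + 1)` has the roots `20 + √41 ± b` and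
`20 - √41 ± c`, where `b² = 440 + 40√41` and `c² = 440 - 40√41`. As `(bc)² = (160√5)²`, the
splitting field is `ℚ(√41, √5, b)`, a tower of three quadratic extensions. Each step is proper:
`41`, `5` and `205` are not rational squares, and `b ∉ ℚ(√41, √5)` reduces, by taking norms
down to `ℚ`, to `128000` and `5120` not being rational squares. Hence the degree is 8, and the
Galois group, acting faithfully on the four roots, is a Sylow 2-subgroup of `S₄`, that is,
dihedral of order 8.
-/

open Polynomial IntermediateField

section QuadraticExtension

variable {F L : Type*} [Field F] [Field L] [Algebra F L] {α : L} {d : F}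

theorem exists_eq_add_mul_of_mem_adjoin (hd : α ^ 2 = algebraMap F L d) {x : L}
    (hx : x ∈ F⟮α⟯) : ∃ u v : F, x = algebraMap F L u + algebraMap F L v * α := by
  have hroot : aeval α (X ^ 2 - C d) = 0 := by simp [hd]
  have hmonic : (X ^ 2 - C d : F[X]).Monic := monic_X_pow_sub_C d two_ne_zero
  rw [← mem_toSubalgebra, adjoin_simple_toSubalgebra_of_isAlgebraic ⟨_, hmonic.ne_zero, hroot⟩,
    Algebra.adjoin_singleton_eq_range_aeval] at hx
  obtain ⟨p, rfl⟩ := hx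
  have hdeg : (X ^ 2 - C d : F[X]).natDegree = 2 := natDegree_X_pow_sub_C
  have hr : (p %ₘ (X ^ 2 - C d)).natDegree ≤ 1 := by
    have := natDegree_modByMonic_lt p hmonic (ne_of_apply_ne natDegree (by simp [hdeg]))
    omega
  refine ⟨(p %ₘ (X ^ 2 - C d)).coeff 0, (p %ₘ (X ^ 2 - C d)).coeff 1, ?_⟩
  rw [AlgHom.toRingHom_eq_coe, RingHom.coe_coe, ← aeval_modByMonic_eq_self_of_root hroot]
  nth_rw 1 [eq_X_add_C_of_natDegree_le_one hr]
  simp only [map_add, map_mul, aeval_C, aeval_X]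
  ring

theorem eq_and_eq_of_add_mul_eq (hα : α ∉ Set.range (algebraMap F L)) {u v u' v' : F}
    (h : algebraMap F L u + algebraMap F L v * α = algebraMap F L u' + algebraMap F L v' * α) :
    u = u' ∧ v = v' := by
  have hv : v = v' := by
    by_contra hv
    refine hα ⟨(u - u') / (v' - v), ?_⟩
    have : algebraMap F L (v' - v) ≠ 0 := by simpa [sub_eq_zero] using Ne.symm hv
    rw [map_div₀, div_eq_iff this, map_sub, map_sub]
    linear_combination h
  subst hv
  exact ⟨(algebraMap F L).injective (add_right_cancel h), rfl⟩

theorem finrank_adjoin_of_sq_eq (hd : α ^ 2 = algebraMap F L d)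
    (hα : α ∉ Set.range (algebraMap F L)) : Module.finrank F F⟮α⟯ = 2 := by
  have hmonic : (X ^ 2 - C d : F[X]).Monic := monic_X_pow_sub_C d two_ne_zero
  have hroot : aeval α (X ^ 2 - C d) = 0 := by simp [hd]
  have hint : IsIntegral F α := ⟨_, hmonic, hroot⟩
  rw [adjoin.finrank hint]
  have hle : (minpoly F α).natDegree ≤ 2 := by
    simpa [natDegree_X_pow_sub_C] using
      natDegree_le_of_dvd (minpoly.dvd F α hroot) hmonic.ne_zero
  have hne : (minpoly F α).natDegree ≠ 1 := fun h => hα (minpoly.natDegree_eq_one_iff.mp h)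
  have := minpoly.natDegree_pos hint
  omega

theorem algebraMap_add_mul_sq (hd : α ^ 2 = algebraMap F L d) (u v : F) :
    (algebraMap F L u + algebraMap F L v * α) ^ 2 =
      algebraMap F L (u ^ 2 + d * v ^ 2) + algebraMap F L (2 * u * v) * α := by
  simp only [map_add, map_mul, map_pow, map_ofNat]
  linear_combination algebraMap F L v ^ 2 * hd

theorem exists_eq_or_eq_mul_of_sq_mem [NeZero (2 : F)] (hd : α ^ 2 = algebraMap F L d)
    (hα : α ∉ Set.range (algebraMap F L)) {x : L} (hx : x ∈ F⟮α⟯)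
    (hx2 : x ^ 2 ∈ Set.range (algebraMap F L)) :
    ∃ u : F, x = algebraMap F L u ∨ x = algebraMap F L u * α := by
  obtain ⟨u, v, rfl⟩ := exists_eq_add_mul_of_mem_adjoin hd hx
  obtain ⟨e, he⟩ := hx2
  rw [algebraMap_add_mul_sq hd, ← add_zero (algebraMap F L e), ← zero_mul α,
    ← map_zero (algebraMap F L)] at he
  obtain ⟨-, huv⟩ := eq_and_eq_of_add_mul_eq hα he
  rcases mul_eq_zero.mp huv.symm with huv | rfl
  · obtain rfl : u = 0 := (mul_eq_zero.mp huv).resolve_left two_ne_zero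
    exact ⟨v, .inr (by simp)⟩
  · exact ⟨u, .inl (by simp)⟩

/-- `a² - d b²` is the norm of `a + b √d`, and the norm of a square is a square. -/
theorem isSquare_sq_sub_mul_sq_of_sq_eq (hd : α ^ 2 = algebraMap F L d)
    (hα : α ∉ Set.range (algebraMap F L)) {x : L} (hx : x ∈ F⟮α⟯) {a b : F}
    (h : x ^ 2 = algebraMap F L a + algebraMap F L b * α) : IsSquare (a ^ 2 - d * b ^ 2) := by
  obtain ⟨u, v, rfl⟩ := exists_eq_add_mul_of_mem_adjoin hd hx
  obtain ⟨rfl, rfl⟩ := eq_and_eq_of_add_mul_eq hα ((algebraMap_add_mul_sq hd u v).symm.trans h)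
  exact ⟨u ^ 2 - d * v ^ 2, by ring⟩

theorem isSquare_of_algebraMap_sq_eq {u a : F} (h : algebraMap F L u ^ 2 = algebraMap F L a) :
    IsSquare a :=
  ⟨u, (algebraMap F L).injective (by rw [← h, map_mul, sq])⟩

end QuadraticExtension

theorem IntermediateField.finrank_adjoin_union {K L : Type*} [Field K] [Field L] [Algebra K L]
    (s t : Set L) :
    Module.finrank K (adjoin K (s ∪ t)) =
      Module.finrank K (adjoin K s) * Module.finrank (adjoin K s) (adjoin (adjoin K s) t) := by
  rw [← adjoin_adjoin_left]
  exact (Module.finrank_mul_finrank K (adjoin K s) (adjoin (adjoin K s) t)).symm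

section DihedralGroup

open Equiv

def dihedralGroupFourToPerm : DihedralGroup 4 →* Perm (Fin 4) where
  toFun
    | .r i => finRotate 4 ^ i.val
    | .sr i => swap 1 3 * finRotate 4 ^ i.val
  map_one' := by decide
  map_mul' := by decide

theorem dihedralGroupFourToPerm_injective : Function.Injective dihedralGroupFourToPerm := by
  decide

theorem Subgroup.nonempty_mulEquiv_of_card_eq_eight {H K : Subgroup (Perm (Fin 4))}
    (hH : Nat.card H = 8) (hK : Nat.card K = 8) : Nonempty (H ≃* K) := by
  have : Fact (Nat.Prime 2) := ⟨Nat.prime_two⟩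
  have hindex {H : Subgroup (Perm (Fin 4))} (hH : Nat.card H = 8) : ¬ 2 ∣ H.index := by
    have := H.card_mul_index
    rw [hH, Nat.card_perm, Nat.card_fin, show (4 : ℕ).factorial = 8 * 3 from rfl] at this
    omega
  have hp {H : Subgroup (Perm (Fin 4))} (hH : Nat.card H = 8) : IsPGroup 2 H :=
    IsPGroup.of_card (n := 3) hH
  exact ⟨Sylow.equiv ((hp hH).toSylow (hindex hH)) ((hp hK).toSylow (hindex hK))⟩

theorem nonempty_mulEquiv_dihedralGroup_four_of_injective {G α : Type*} [Group G] [Finite α]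
    (f : G →* Perm α) (hf : Function.Injective f) (hG : Nat.card G = 8)
    (hα : Nat.card α ≤ 4) : Nonempty (G ≃* DihedralGroup 4) := by
  have hα4 : Nat.card α = 4 := by
    have h8 := hG ▸ Subgroup.card_dvd_of_injective f hf
    rw [Nat.card_perm] at h8
    interval_cases Nat.card α <;> simp_all [Nat.factorial]
  let e : Perm α ≃* Perm (Fin 4) := (Finite.equivFinOfCardEq hα4).permCongrHom
  let f' := e.toMonoidHom.comp f
  have hf' : Function.Injective f' := e.injective.comp hf
  have hD := MonoidHom.ofInjective dihedralGroupFourToPerm_injective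
  obtain ⟨φ⟩ := Subgroup.nonempty_mulEquiv_of_card_eq_eight
    ((Nat.card_congr (MonoidHom.ofInjective hf').toEquiv).symm.trans hG)
    ((Nat.card_congr hD.toEquiv).symm.trans (DihedralGroup.nat_card))
  exact ⟨(MonoidHom.ofInjective hf').trans (φ.trans hD.symm)⟩

theorem Polynomial.IsSplittingField.nonempty_mulEquiv_dihedralGroup_four {F K : Type*} [Field F]
    [PerfectField F] [Field K] [Algebra F K] (p : F[X]) [p.IsSplittingField F K]
    (hp : p.natDegree ≤ 4) (hK : Module.finrank F K = 8) :
    Nonempty ((K ≃ₐ[F] K) ≃* DihedralGroup 4) := by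
  have := IsSplittingField.finiteDimensional K p
  have : IsGalois F K := { to_normal := Normal.of_isSplittingField p }
  have : Fact (p.map (algebraMap F K)).Splits := ⟨IsSplittingField.splits K p⟩
  refine nonempty_mulEquiv_dihedralGroup_four_of_injective ((Gal.galActionHom p K).comp
    (AlgEquiv.autCongr (IsSplittingField.algEquiv K p)).toMonoidHom)
    ((Gal.galActionHom_injective p K).comp (AlgEquiv.autCongr _).injective)
    (IsGalois.card_aut_eq_finrank F K ▸ hK) ?_
  rw [Nat.card_coe_set_eq]
  exact (ncard_rootSet_le p K).trans hp

end DihedralGroup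

namespace Chi₂

variable {A S B C : ℂ}

theorem notMem_range_of_sq_eq_41 (hA : A ^ 2 = 41) : A ∉ Set.range (algebraMap ℚ ℂ) := by
  rintro ⟨q, rfl⟩
  have := isSquare_of_algebraMap_sq_eq (a := 41) (hA.trans (map_ofNat _ 41).symm)
  norm_num at this

theorem notMem_range_of_sq_eq_5 (hA : A ^ 2 = 41) (hS : S ^ 2 = 5) :
    S ∉ Set.range (algebraMap ℚ⟮A⟯ ℂ) := by
  rintro ⟨⟨x, hx⟩, hxS : x = S⟩
  subst hxS
  obtain ⟨q, rfl | rfl⟩ := exists_eq_or_eq_mul_of_sq_mem (d := 41) (by simpa using hA)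
    (notMem_range_of_sq_eq_41 hA) hx ⟨5, by simp [hS]⟩
  · have := isSquare_of_algebraMap_sq_eq (a := 5) (hS.trans (map_ofNat _ 5).symm)
    norm_num at this
  · have := isSquare_of_algebraMap_sq_eq (L := ℂ) (u := 41 * q) (a := (205 : ℚ)) (by
      simp only [map_mul, map_ofNat]
      linear_combination 41 * hS - 41 * (algebraMap ℚ ℂ q) ^ 2 * hA)
    norm_num at this

theorem notMem_range_of_sq_eq_440_add (hA : A ^ 2 = 41) (hS : S ^ 2 = 5)
    (hB : B ^ 2 = 440 + 40 * A) : B ∉ Set.range (algebraMap ℚ⟮A, S⟯ ℂ) := by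
  rintro ⟨⟨x, hx⟩, hxB : x = B⟩
  subst hxB
  rw [← adjoin_simple_adjoin_simple, mem_restrictScalars] at hx
  have hd41 : A ^ 2 = algebraMap ℚ ℂ 41 := by simpa using hA
  have hA41 := notMem_range_of_sq_eq_41 hA
  have hB2 : x ^ 2 ∈ Set.range (algebraMap ℚ⟮A⟯ ℂ) :=
    ⟨⟨440 + 40 * A, add_mem (ofNat_mem ℚ⟮A⟯ 440) (mul_mem (ofNat_mem ℚ⟮A⟯ 40)
      (mem_adjoin_simple_self ℚ A))⟩, hB.symm⟩
  -- Then `B = u` or `B = u √5` with `u ∈ ℚ(√41)`, so `440 + 40 √41` or `88 + 8 √41` is a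
  -- square in `ℚ(√41)`; but their norms `128000` and `5120` are not squares in `ℚ`.
  obtain ⟨u, rfl | rfl⟩ := exists_eq_or_eq_mul_of_sq_mem (d := 5) (by rw [hS, map_ofNat])
    (notMem_range_of_sq_eq_5 hA hS) hx hB2
  · have := isSquare_sq_sub_mul_sq_of_sq_eq (a := 440) (b := 40) hd41 hA41 u.2
      (by simpa using hB)
    norm_num at this
  · have := isSquare_sq_sub_mul_sq_of_sq_eq (a := 88) (b := 8) hd41 hA41 u.2 (by
      simp only [map_ofNat, IntermediateField.algebraMap_apply] at hB ⊢
      linear_combination hB / 5 - (u : ℂ) ^ 2 * hS / 5)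
    norm_num at this

theorem finrank_adjoin_eq_eight (hA : A ^ 2 = 41) (hS : S ^ 2 = 5)
    (hB : B ^ 2 = 440 + 40 * A) : Module.finrank ℚ ℚ⟮A, S, B⟯ = 8 := by
  have hB2 : 440 + 40 * A ∈ ℚ⟮A, S⟯ :=
    add_mem (ofNat_mem ℚ⟮A, S⟯ 440) (mul_mem (ofNat_mem ℚ⟮A, S⟯ 40) (subset_adjoin ℚ _ (by simp)))
  have h1 : Module.finrank ℚ ℚ⟮A⟯ = 2 :=
    finrank_adjoin_of_sq_eq (d := 41) (by simpa using hA) (notMem_range_of_sq_eq_41 hA)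
  have h2 : Module.finrank ℚ⟮A⟯ ℚ⟮A⟯⟮S⟯ = 2 :=
    finrank_adjoin_of_sq_eq (d := 5) (by rw [hS, map_ofNat]) (notMem_range_of_sq_eq_5 hA hS)
  have h3 : Module.finrank ℚ⟮A, S⟯ ℚ⟮A, S⟯⟮B⟯ = 2 :=
    finrank_adjoin_of_sq_eq (d := ⟨_, hB2⟩) hB (notMem_range_of_sq_eq_440_add hA hS hB)
  rw [show ({A, S, B} : Set ℂ) = {A, S} ∪ {B} by rw [Set.insert_union, Set.singleton_union],
    finrank_adjoin_union, h3, ← Set.singleton_union, finrank_adjoin_union, h1, h2]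

theorem rootSet_eq (hA : A ^ 2 = 41) (hB : B ^ 2 = 440 + 40 * A) (hC : C ^ 2 = 440 - 40 * A) :
    (X ^ 4 - 80 * X ^ 3 + 1438 * X ^ 2 - 80 * X + 1 : ℚ[X]).rootSet ℂ =
      {20 + A + B, 20 + A - B, 20 - A + C, 20 - A - C} := by
  have hne : (X ^ 4 - 80 * X ^ 3 + 1438 * X ^ 2 - 80 * X + 1 : ℚ[X]) ≠ 0 := fun h ↦ by
    simpa using congrArg (eval 0) h
  ext x
  have hfactor : x ^ 4 - 80 * x ^ 3 + 1438 * x ^ 2 - 80 * x + 1 =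
      (x - (20 + A + B)) * (x - (20 + A - B)) * (x - (20 - A + C)) * (x - (20 - A - C)) := by
    linear_combination (-((x - (20 - A + C)) * (x - (20 - A - C)))) * (hA - hB)
      + (-(x ^ 2 - (40 + 2 * A) * x + 1)) * (hA - hC) + (4 * x ^ 2) * hA
  simp only [mem_rootSet_of_ne hne, map_add, map_sub, map_mul, map_pow, aeval_X, map_ofNat,
    map_one, hfactor, mul_eq_zero, sub_eq_zero, or_assoc, Set.mem_insert_iff,
    Set.mem_singleton_iff]

theorem adjoin_rootSet_eq (hA : A ^ 2 = 41) (hB : B ^ 2 = 440 + 40 * A)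
    (hC : C ^ 2 = 440 - 40 * A) :
    adjoin ℚ ((X ^ 4 - 80 * X ^ 3 + 1438 * X ^ 2 - 80 * X + 1 : ℚ[X]).rootSet ℂ) =
      ℚ⟮A, B * C / 160, B⟯ := by
  have hB0 : B ≠ 0 := by
    rintro rfl
    have hA11 : A = -11 := by linear_combination -hB / 40
    norm_num [hA11] at hA
  rw [rootSet_eq hA hB hC]
  apply le_antisymm
  · set E := ℚ⟮A, B * C / 160, B⟯
    have hAE : A ∈ E := subset_adjoin ℚ _ (by simp)
    have hBE : B ∈ E := subset_adjoin ℚ _ (by simp)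
    have hCE : C ∈ E := by
      rw [show C = 160 * (B * C / 160) / B by field_simp]
      exact div_mem (mul_mem (ofNat_mem E 160) (subset_adjoin ℚ _ (by simp))) hBE
    have h20 : (20 : ℂ) ∈ E := ofNat_mem E 20
    rw [adjoin_le_iff]
    rintro x (rfl | rfl | rfl | rfl)
    · exact add_mem (add_mem h20 hAE) hBE
    · exact sub_mem (add_mem h20 hAE) hBE
    · exact add_mem (sub_mem h20 hAE) hCE
    · exact sub_mem (sub_mem h20 hAE) hCE
  · set E := adjoin ℚ {20 + A + B, 20 + A - B, 20 - A + C, 20 - A - C}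
    have hr₁ : 20 + A + B ∈ E := subset_adjoin ℚ _ (by simp)
    have hr₂ : 20 + A - B ∈ E := subset_adjoin ℚ _ (by simp)
    have hr₃ : 20 - A + C ∈ E := subset_adjoin ℚ _ (by simp)
    have hr₄ : 20 - A - C ∈ E := subset_adjoin ℚ _ (by simp)
    have hAE : A ∈ E := by
      rw [show A = (20 + A + B + (20 + A - B)) / 2 - 20 by ring]
      exact sub_mem (div_mem (add_mem hr₁ hr₂) (ofNat_mem E 2)) (ofNat_mem E 20)
    have hBE : B ∈ E := by
      rw [show B = (20 + A + B - (20 + A - B)) / 2 by ring]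
      exact div_mem (sub_mem hr₁ hr₂) (ofNat_mem E 2)
    have hCE : C ∈ E := by
      rw [show C = (20 - A + C - (20 - A - C)) / 2 by ring]
      exact div_mem (sub_mem hr₃ hr₄) (ofNat_mem E 2)
    rw [adjoin_le_iff]
    rintro x (rfl | rfl | rfl)
    · exact hAE
    · exact div_mem (mul_mem hBE hCE) (ofNat_mem E 160)
    · exact hBE

end Chi₂

/-- The splitting field `K₂ ⊆ ℂ` of `χ₂ = X⁴ - 80X³ + 1438X² - 80X + 1` over `ℚ` has
degree 8 and Galois group isomorphic to the dihedral group of order 8. -/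
theorem stmt_12 (χ₂ : ℚ[X]) (hχ : χ₂ = X ^ 4 - 80 * X ^ 3 + 1438 * X ^ 2 - 80 * X + 1)
    (K₂ : IntermediateField ℚ ℂ) (hK : K₂ = IntermediateField.adjoin ℚ (χ₂.rootSet ℂ)) :
    Module.finrank ℚ K₂ = 8 ∧ Nonempty ((K₂ ≃ₐ[ℚ] K₂) ≃* DihedralGroup 4) := by
  subst hK
  obtain ⟨A, hA⟩ := IsAlgClosed.exists_pow_nat_eq (41 : ℂ) two_pos
  obtain ⟨B, hB⟩ := IsAlgClosed.exists_pow_nat_eq (440 + 40 * A) two_pos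
  obtain ⟨C, hC⟩ := IsAlgClosed.exists_pow_nat_eq (440 - 40 * A) two_pos
  have hS : (B * C / 160) ^ 2 = 5 := by
    linear_combination (C ^ 2 * hB + (440 + 40 * A) * hC - 1600 * hA) / 25600
  have hdeg : Module.finrank ℚ (adjoin ℚ (χ₂.rootSet ℂ)) = 8 := by
    rw [hχ, Chi₂.adjoin_rootSet_eq hA hB hC]
    exact Chi₂.finrank_adjoin_eq_eight hA hS hB
  have : χ₂.IsSplittingField ℚ (adjoin ℚ (χ₂.rootSet ℂ)) :=
    adjoin_rootSet_isSplittingField (IsAlgClosed.splits _)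
  refine ⟨hdeg, IsSplittingField.nonempty_mulEquiv_dihedralGroup_four χ₂ ?_ hdeg⟩
  rw [hχ]
  compute_degree!
end

section
/- Let A and B be the 4×4 integer matrices A = [[−1,0,−1,−1],[0,1,0,0],[0,0,0,−1],[0,0,−1,0]] and B = [[0,1,0,0],[1,0,0,0],[−1,1,−1,0],[0,0,0,1]]. Then the characteristic polynomial of the product A⁴·B·A·B equals X⁴ − 2X³ − 30X² − 2X + 1. -/
open Polynomial Matrix

theorem pow_four_mul_mul_mul_eq :
    (!![-1, 0, -1, -1; 0, 1, 0, 0; 0, 0, 0, -1; 0, 0, -1, 0] : Matrix (Fin 4) (Fin 4) ℤ) ^ 4 *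
        !![0, 1, 0, 0; 1, 0, 0, 0; -1, 1, -1, 0; 0, 0, 0, 1] *
        !![-1, 0, -1, -1; 0, 1, 0, 0; 0, 0, 0, -1; 0, 0, -1, 0] *
        !![0, 1, 0, 0; 1, 0, 0, 0; -1, 1, -1, 0; 0, 0, 0, 1] =
      !![5, 4, 0, 8; 1, -2, 1, -1; 0, 2, -1, 2; 1, -1, 1, 0] := by
  decide

theorem charpoly_eq_of_entries :
    (!![5, 4, 0, 8; 1, -2, 1, -1; 0, 2, -1, 2; 1, -1, 1, 0] : Matrix (Fin 4) (Fin 4) ℤ).charpoly =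
      X ^ 4 - 2 * X ^ 3 - 30 * X ^ 2 - 2 * X + 1 := by
  rw [charpoly, det_succ_row_zero]
  simp [Fin.sum_univ_succ, det_fin_three, charmatrix_apply, Fin.succAbove]
  ring

/-- For the explicit integer matrices `A` and `B` below, the characteristic polynomial of
`A⁴·B·A·B` is `X⁴ - 2X³ - 30X² - 2X + 1`. -/
theorem stmt_14 (A B : Matrix (Fin 4) (Fin 4) ℤ)
    (hA : A = !![-1, 0, -1, -1; 0, 1, 0, 0; 0, 0, 0, -1; 0, 0, -1, 0])
    (hB : B = !![0, 1, 0, 0; 1, 0, 0, 0; -1, 1, -1, 0; 0, 0, 0, 1]) :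
    Matrix.charpoly (A ^ 4 * B * A * B) =
      X ^ 4 - 2 * X ^ 3 - 30 * X ^ 2 - 2 * X + 1 := by
  rw [hA, hB, pow_four_mul_mul_mul_eq, charpoly_eq_of_entries]
end
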